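/- arXiv:1702.01778 — 4 statements merged into one kernel-verified Lean document; each statement's English description precedes it below -/
import Mathlib

section
/- The equation (-1/Γ(1-ν))·E[exp(-λκT_ν)] - κγ y^{ν-1}·(-1/Γ(1-ν)) = (λκ)^ν has exactly one solution κ ∈ (0,∞), for each fixed y > 0. -/
/-!
Write `c = -1/Γ(1-ν)`, which is positive because `Γ` is negative on `(-1, 0)`, and `L` for the
Laplace transform of the Pareto density. On `[0, ∞)` the function
`κ ↦ c L(λκ) - κγy^{ν-1}c - (λκ)^ν` is continuous (dominated convergence) and strictly
decreasing (`L` is antitone, `(λκ)^ν` strictly increasing); it equals `c > 0` at `κ = 0` and is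
negative once `(λκ)^ν > c`, because `L ≤ L(0) = 1`. The intermediate value theorem gives the
unique zero.
-/

open Real Set MeasureTheory Filter

lemma Real.Gamma_neg_of_neg_one_lt_of_neg {s : ℝ} (hs1 : -1 < s) (hs0 : s < 0) :
    Gamma s < 0 := by
  have hrec : Gamma (s + 1) = s * Gamma s := Gamma_add_one hs0.ne
  have hpos : 0 < Gamma (s + 1) := Gamma_pos_of_pos (by linarith)
  nlinarith

section LaplaceTransform

variable {p : ℝ → ℝ} {S : Set ℝ}

lemma norm_exp_neg_mul_mul_le {t x a : ℝ} (ht : 0 ≤ t) (hx : 0 ≤ x) (ha : 0 ≤ a) :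
    ‖exp (-(t * x)) * a‖ ≤ a := by
  rw [norm_mul, norm_of_nonneg (exp_pos _).le, norm_of_nonneg ha]
  exact mul_le_of_le_one_left ha (exp_le_one_iff.mpr (by nlinarith))

lemma ae_norm_exp_neg_mul_mul_le (hS : MeasurableSet S) (hS0 : S ⊆ Ici 0)
    (hp0 : ∀ x ∈ S, 0 ≤ p x) {t : ℝ} (ht : 0 ≤ t) :
    ∀ᵐ x ∂volume.restrict S, ‖exp (-(t * x)) * p x‖ ≤ p x :=
  (ae_restrict_iff' hS).mpr <| ae_of_all _ fun x hx =>
    norm_exp_neg_mul_mul_le ht (hS0 hx) (hp0 x hx)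

lemma integrableOn_exp_neg_mul_mul
    (hS : MeasurableSet S) (hS0 : S ⊆ Ici 0) (hp : IntegrableOn p S)
    (hp0 : ∀ x ∈ S, 0 ≤ p x) {t : ℝ} (ht : 0 ≤ t) :
    IntegrableOn (fun x => exp (-(t * x)) * p x) S :=
  hp.mono' ((by fun_prop : Continuous fun x => exp (-(t * x))).aestronglyMeasurable.mul
    hp.aestronglyMeasurable) (ae_norm_exp_neg_mul_mul_le hS hS0 hp0 ht)

lemma antitoneOn_integral_exp_neg_mul_mul
    (hS : MeasurableSet S) (hS0 : S ⊆ Ici 0) (hp : IntegrableOn p S)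
    (hp0 : ∀ x ∈ S, 0 ≤ p x) :
    AntitoneOn (fun t => ∫ x in S, exp (-(t * x)) * p x) (Ici 0) := by
  intro t₁ ht₁ t₂ ht₂ ht
  refine setIntegral_mono_on (integrableOn_exp_neg_mul_mul hS hS0 hp hp0 ht₂)
    (integrableOn_exp_neg_mul_mul hS hS0 hp hp0 ht₁) hS fun x hx => ?_
  have hx0 : 0 ≤ x := hS0 hx
  gcongr
  exact hp0 x hx

lemma continuousOn_integral_exp_neg_mul_mul
    (hS : MeasurableSet S) (hS0 : S ⊆ Ici 0) (hp : IntegrableOn p S)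
    (hp0 : ∀ x ∈ S, 0 ≤ p x) :
    ContinuousOn (fun t => ∫ x in S, exp (-(t * x)) * p x) (Ici 0) :=
  continuousOn_of_dominated
    (fun t ht => (integrableOn_exp_neg_mul_mul hS hS0 hp hp0 ht).aestronglyMeasurable)
    (fun t ht => ae_norm_exp_neg_mul_mul_le hS hS0 hp0 ht) hp
    (ae_of_all _ fun x => (by fun_prop : Continuous fun t => exp (-(t * x)) * p x).continuousOn)

end LaplaceTransform

lemma integrableOn_pareto_density {ν : ℝ} (hν : 0 < ν) :
    IntegrableOn (fun x : ℝ => ν * x ^ (-ν - 1)) (Ioi 1) :=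
  (integrableOn_Ioi_rpow_of_lt (by linarith) one_pos).const_mul ν

lemma integral_pareto_density {ν : ℝ} (hν : 0 < ν) :
    ∫ x in Ioi (1 : ℝ), ν * x ^ (-ν - 1) = 1 := by
  rw [integral_const_mul, integral_Ioi_rpow_of_lt (by linarith) one_pos, one_rpow,
    show -ν - 1 + 1 = -ν by ring]
  field_simp

lemma existsUnique_pos_eq_zero_of_strictAntiOn {f : ℝ → ℝ} (hf : ContinuousOn f (Ici 0))
    (hf_anti : StrictAntiOn f (Ici 0)) (hf0 : 0 < f 0) {b : ℝ} (hb : 0 ≤ b) (hfb : f b < 0) :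
    ∃! x, 0 < x ∧ f x = 0 := by
  obtain ⟨x, hx, hfx⟩ : ∃ x ∈ Icc 0 b, f x = 0 :=
    intermediate_value_Icc' hb (hf.mono Icc_subset_Ici_self) ⟨hfb.le, hf0.le⟩
  have hx0 : 0 < x := hx.1.lt_of_ne (by rintro rfl; exact hf0.ne' hfx)
  refine ⟨x, ⟨hx0, hfx⟩, fun x' ⟨hx'0, hfx'⟩ => ?_⟩
  exact hf_anti.injOn (mem_Ici.mpr hx'0.le) (mem_Ici.mpr hx0.le) (hfx'.trans hfx.symm)

lemma existsUnique_pos_sub_mul_eq_mul_rpow {L : ℝ → ℝ} (hL : ContinuousOn L (Ici 0))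
    (hL_anti : AntitoneOn L (Ici 0)) (hL0 : 0 < L 0) {a lam ν : ℝ} (ha : 0 ≤ a)
    (hlam : 0 < lam) (hν : 0 < ν) :
    ∃! κ, 0 < κ ∧ L (lam * κ) - κ * a = (lam * κ) ^ ν := by
  set f := fun κ => L (lam * κ) - κ * a - (lam * κ) ^ ν
  have hmaps : MapsTo (lam * ·) (Ici 0) (Ici 0) := fun κ hκ =>
    mem_Ici.mpr (mul_nonneg hlam.le hκ)
  have hf_cont : ContinuousOn f (Ici 0) :=
    ((hL.comp (by fun_prop) hmaps).sub (by fun_prop)).sub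
      ((continuousOn_id.rpow_const fun _ _ => Or.inr hν.le).comp (by fun_prop) hmaps)
  have hf_anti : StrictAntiOn f (Ici 0) := by
    intro κ₁ hκ₁ κ₂ hκ₂ hκ
    have h1 : L (lam * κ₂) ≤ L (lam * κ₁) :=
      hL_anti (hmaps hκ₁) (hmaps hκ₂) (mul_le_mul_of_nonneg_left hκ.le hlam.le)
    have h2 : κ₁ * a ≤ κ₂ * a := mul_le_mul_of_nonneg_right hκ.le ha
    have h3 : (lam * κ₁) ^ ν < (lam * κ₂) ^ ν :=
      strictMonoOn_rpow_Ici_of_exponent_pos hν (hmaps hκ₁) (hmaps hκ₂)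
        (mul_lt_mul_of_pos_left hκ hlam)
    simp only [f]
    linarith
  have hf0 : f 0 = L 0 := by simp [f, zero_rpow hν.ne']
  set b := (L 0 + 1) ^ ν⁻¹ / lam
  have hb : 0 ≤ b := by positivity
  have hfb : f b < 0 := by
    have hpow : (lam * b) ^ ν = L 0 + 1 := by
      rw [mul_div_cancel₀ _ hlam.ne', rpow_inv_rpow (by linarith) hν.ne']
    have h1 : L (lam * b) ≤ L 0 := hL_anti (mem_Ici.mpr le_rfl) (hmaps hb) (by positivity)
    have h2 : 0 ≤ b * a := by positivity
    simp only [f, hpow]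
    linarith
  simpa only [f, sub_eq_zero] using
    existsUnique_pos_eq_zero_of_strictAntiOn hf_cont hf_anti (hf0 ▸ hL0) hb hfb

theorem kappa_equation_unique_solution (ν lam γ y : ℝ)
    (hν : 1 < ν) (hν2 : ν < 2) (hlam : 0 < lam) (hγ : 0 ≤ γ) (hy : 0 < y) :
    ∃! κ : ℝ, 0 < κ ∧
      (-1 / Real.Gamma (1 - ν)) *
          (∫ x in Set.Ioi (1 : ℝ), Real.exp (-(lam * κ * x)) * (ν * x ^ (-ν - 1)))
        - κ * γ * y ^ (ν - 1) * (-1 / Real.Gamma (1 - ν)) = (lam * κ) ^ ν := by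
  have hν0 : 0 < ν := by linarith
  set c := -1 / Gamma (1 - ν)
  have hc : 0 < c :=
    div_pos_of_neg_of_neg (by norm_num)
      (Gamma_neg_of_neg_one_lt_of_neg (by linarith) (by linarith))
  set L := fun t : ℝ => ∫ x in Ioi (1 : ℝ), exp (-(t * x)) * (ν * x ^ (-ν - 1))
  have hdens := integrableOn_pareto_density hν0
  have hdens0 : ∀ x ∈ Ioi (1 : ℝ), 0 ≤ ν * x ^ (-ν - 1) := fun x hx =>
    mul_nonneg hν0.le (rpow_nonneg (zero_le_one.trans hx.le) _)
  have hS0 : Ioi (1 : ℝ) ⊆ Ici 0 := Ioi_subset_Ici zero_le_one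
  have hL_cont : ContinuousOn L (Ici 0) :=
    continuousOn_integral_exp_neg_mul_mul measurableSet_Ioi hS0 hdens hdens0
  have hL_anti : AntitoneOn L (Ici 0) :=
    antitoneOn_integral_exp_neg_mul_mul measurableSet_Ioi hS0 hdens hdens0
  have hL0 : L 0 = 1 := by simpa [L] using integral_pareto_density hν0
  have hcL_anti : AntitoneOn (fun t => c * L t) (Ici 0) := fun _ h₁ _ h₂ h =>
    mul_le_mul_of_nonneg_left (hL_anti h₁ h₂ h) hc.le
  have hcL0 : 0 < c * L 0 := by rwa [hL0, mul_one]
  have hassoc (κ : ℝ) : κ * γ * y ^ (ν - 1) * c = κ * (γ * y ^ (ν - 1) * c) := by ring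
  simpa only [hassoc] using existsUnique_pos_sub_mul_eq_mul_rpow (hL_cont.const_mul c)
    hcL_anti hcL0 (a := γ * y ^ (ν - 1) * c) (by positivity) hlam hν0
end

section
/- Let m : [0,∞) → [0,1] solve Boxma's equation m(w) = ∫_0^w exp(-λt(1-m(w))) dF(t) for a fixed w > 0, where F is a distribution function on [0,∞) with λ∫_0^w t dF(t) ≤ ρ ≤ 1. If there exists C > 0 with e^{-λt} ≤ 1 - λt + Ct² for all relevant t, then (1-m(w))·(1 - λ∫_0^w t dF(t) + (1-m(w))·C∫_0^w t² dF(t)) ≥ 1 - F(w). -/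
open Set MeasureTheory

theorem measure_Iic_eq_measure_Icc_of_measure_Iio_eq_zero {μ : Measure ℝ} {a : ℝ}
    (h : μ (Iio a) = 0) (b : ℝ) : μ (Iic b) = μ (Icc a b) := by
  refine le_antisymm ?_ (measure_mono Icc_subset_Iic_self)
  calc μ (Iic b) ≤ μ (Iio a ∪ Icc a b) :=
        measure_mono fun x hx => (lt_or_ge x a).imp id fun hax => ⟨hax, hx⟩
    _ ≤ μ (Iio a) + μ (Icc a b) := measure_union_le _ _
    _ = μ (Icc a b) := by rw [h, zero_add]

theorem setIntegral_Icc_quadratic (μ : Measure ℝ) [IsFiniteMeasureOnCompacts μ]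
    (a b c₀ c₁ c₂ : ℝ) :
    ∫ t in Icc a b, (c₀ + c₁ * t + c₂ * t ^ 2) ∂μ
      = c₀ * μ.real (Icc a b) + c₁ * ∫ t in Icc a b, t ∂μ
        + c₂ * ∫ t in Icc a b, t ^ 2 ∂μ := by
  have hint : ∀ {f : ℝ → ℝ}, Continuous f → IntegrableOn f (Icc a b) μ :=
    fun hf => hf.integrableOn_Icc
  rw [integral_add (hint (by fun_prop)) (hint (by fun_prop)),
    integral_add (hint (by fun_prop)) (hint (by fun_prop)),
    integral_const_mul, integral_const_mul, setIntegral_const, smul_eq_mul, mul_comm]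

theorem boxma_lower_bound_general (lam w C mw : ℝ)
    (μ : Measure ℝ) [IsProbabilityMeasure μ] (hsupp : μ (Set.Iio 0) = 0)
    (hBoxma : mw = ∫ t in Set.Icc 0 w, Real.exp (-(lam * (1 - mw) * t)) ∂μ)
    (hexp : ∀ t ∈ Set.Icc 0 w,
      Real.exp (-(lam * (1 - mw) * t)) ≤
        1 - lam * (1 - mw) * t + C * ((1 - mw) * t) ^ 2) :
    (1 - mw) * (1 - lam * ∫ t in Set.Icc 0 w, t ∂μ
        + (1 - mw) * C * ∫ t in Set.Icc 0 w, t ^ 2 ∂μ)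
      ≥ 1 - (μ (Set.Iic w)).toReal := by
  set u := 1 - mw
  have hbound : mw ≤ ∫ t in Icc 0 w, (1 + -(lam * u) * t + C * u ^ 2 * t ^ 2) ∂μ := by
    calc mw = ∫ t in Icc 0 w, Real.exp (-(lam * u * t)) ∂μ := hBoxma
      _ ≤ ∫ t in Icc 0 w, (1 + -(lam * u) * t + C * u ^ 2 * t ^ 2) ∂μ :=
        setIntegral_mono_on (by fun_prop : Continuous _).integrableOn_Icc
          (by fun_prop : Continuous _).integrableOn_Icc measurableSet_Icc
          fun t ht => (hexp t ht).trans_eq (by ring)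
  rw [setIntegral_Icc_quadratic, measureReal_def,
    ← measure_Iic_eq_measure_Icc_of_measure_Iio_eq_zero hsupp] at hbound
  linarith

theorem boxma_lower_bound (lam ρ w C mw : ℝ)
    (μ : Measure ℝ) [IsProbabilityMeasure μ] (hsupp : μ (Set.Iio 0) = 0)
    (hlam : 0 < lam) (hw : 0 < w) (hC : 0 < C) (hρ : ρ ≤ 1)
    (hmw : mw ∈ Set.Icc (0 : ℝ) 1)
    (hmoment : lam * ∫ t in Set.Icc 0 w, t ∂μ ≤ ρ)
    (hBoxma : mw = ∫ t in Set.Icc 0 w, Real.exp (-(lam * (1 - mw) * t)) ∂μ)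
    (hexp : ∀ t ∈ Set.Icc 0 w,
      Real.exp (-(lam * (1 - mw) * t)) ≤
        1 - lam * (1 - mw) * t + C * ((1 - mw) * t) ^ 2) :
    (1 - mw) * (1 - lam * ∫ t in Set.Icc 0 w, t ∂μ
        + (1 - mw) * C * ∫ t in Set.Icc 0 w, t ^ 2 ∂μ)
      ≥ 1 - (μ (Set.Iic w)).toReal :=
  boxma_lower_bound_general lam w C mw μ hsupp hBoxma hexp
end

section
/- Fix λ > 0 and a bounded continuous κ : (0,∞) → (0,∞), and let Z_t (t ≥ 0) have distribution function Φ(t,x) = exp(-λ∫_x^{x+t/λ} κ(y)/y dy) for x > 0 (and Φ(t,x)=0 for x ≤ 0, t > 0). Define T(t)f(x) = E[f(max(x - t/λ, Z_t))] for f in the space of continuous functions on [0,∞) vanishing at infinity. Then T(s)T(t) = T(s+t) for all s, t ≥ 0. -/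
/-!
Since `max (max (x - s/λ) Z_s - t/λ) Z_t = max (x - (s+t)/λ) (max (Z_s - t/λ) Z_t)`, Fubini's
theorem writes `T(s) T(t) f (x)` as the expectation of `f (max (x - (s+t)/λ) W)` with
`W = max (Z_s - t/λ) Z_t` built from independent copies. The distribution function of `W` at
`a > 0` is `Φ(s, a + t/λ) Φ(t, a)`, and additivity of `∫ κ(y)/y dy` over the adjacent intervals
`[a, a + t/λ]` and `[a + t/λ, a + (s+t)/λ]` turns this product into `Φ(s+t, a)`. As `W` and `Z_{s+t}`
are nonnegative, their laws agree, so the expectation is `T(s+t) f (x)`.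
-/

open Filter Set MeasureTheory ProbabilityTheory Topology

lemma MeasureTheory.Measure.eq_of_measure_Iic_eq_of_ne {μ ν : Measure ℝ} [IsProbabilityMeasure μ]
    [IsProbabilityMeasure ν] (a₀ : ℝ) (h : ∀ a ≠ a₀, μ (Iic a) = ν (Iic a)) : μ = ν := by
  have hcdf : ∀ a ≠ a₀, cdf μ a = cdf ν a := fun a ha => by
    rw [cdf_eq_real, cdf_eq_real, measureReal_def, measureReal_def, h a ha]
  refine Measure.eq_of_cdf μ ν (StieltjesFunction.ext fun a => ?_)
  rcases eq_or_ne a a₀ with rfl | ha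
  · -- both distribution functions are right-continuous and agree to the right of `a`
    have hμ : Tendsto (cdf μ) (𝓝[>] a) (𝓝 (cdf μ a)) :=
      ((cdf μ).right_continuous a).mono Ioi_subset_Ici_self
    have hν : Tendsto (cdf ν) (𝓝[>] a) (𝓝 (cdf ν a)) :=
      ((cdf ν).right_continuous a).mono Ioi_subset_Ici_self
    refine tendsto_nhds_unique (hμ.congr' ?_) hν
    filter_upwards [self_mem_nhdsWithin] with b hb using hcdf b (ne_of_gt hb)
  · exact hcdf a ha

lemma Continuous.isBounded_image_Ici_of_tendsto {E : Type*} [PseudoMetricSpace E]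
    {f : ℝ → E} {l : E} (hf : Continuous f) (hlim : Tendsto f atTop (𝓝 l)) (c : ℝ) :
    Bornology.IsBounded (f '' Ici c) := by
  obtain ⟨s, hs, hbdd⟩ := Metric.exists_isBounded_image_of_tendsto hlim
  obtain ⟨B, hB⟩ := mem_atTop_sets.mp hs
  have hsplit : Ici c ⊆ Icc c B ∪ s := fun w hw => by
    rcases le_total w B with hwB | hBw
    · exact Or.inl ⟨hw, hwB⟩
    · exact Or.inr (hB w hBw)
  refine (((isCompact_Icc (a := c) (b := B)).image hf).isBounded.union hbdd).subset ?_
  rw [← image_union]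
  exact image_mono hsplit

lemma measure_prod_setOf_max_sub_le {Ω Ω' : Type*} [MeasurableSpace Ω] [MeasurableSpace Ω']
    (μ : Measure Ω) (ν : Measure Ω') [SFinite ν] (X : Ω → ℝ) (Y : Ω' → ℝ) (c a : ℝ) :
    μ.prod ν {p | max (X p.1 - c) (Y p.2) ≤ a} = μ {ω | X ω ≤ a + c} * ν {ω | Y ω ≤ a} := by
  have hset : {p : Ω × Ω' | max (X p.1 - c) (Y p.2) ≤ a}
      = {ω | X ω ≤ a + c} ×ˢ {ω | Y ω ≤ a} := by
    ext p
    simp only [mem_ofPred_eq, mem_prod, max_le_iff, sub_le_iff_le_add]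
  rw [hset, Measure.prod_prod]

lemma intervalIntegrable_div_id_of_continuousOn {κ : ℝ → ℝ} (hκ : ContinuousOn κ (Ioi 0))
    {p q : ℝ} (hp : 0 < p) (hq : 0 < q) :
    IntervalIntegrable (fun y => κ y / y) volume p q := by
  have hsub : uIcc p q ⊆ Ioi 0 := fun y hy => lt_of_lt_of_le (lt_min hp hq) hy.1
  exact ((hκ.mono hsub).div continuousOn_id fun y hy => (hsub hy).ne').intervalIntegrable

lemma exp_neg_mul_integral_mul_exp_neg_mul_integral {g : ℝ → ℝ} {a b c : ℝ}
    (hab : IntervalIntegrable g volume a b) (hbc : IntervalIntegrable g volume b c) (lam : ℝ) :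
    Real.exp (-(lam * ∫ y in a..b, g y)) * Real.exp (-(lam * ∫ y in b..c, g y))
      = Real.exp (-(lam * ∫ y in a..c, g y)) := by
  rw [← Real.exp_add, ← intervalIntegral.integral_add_adjacent_intervals hab hbc]
  ring_nf

lemma integral_integral_comp_eq_of_map_prod_eq {Ω Ω' Ω'' : Type*} [MeasurableSpace Ω]
    [MeasurableSpace Ω'] [MeasurableSpace Ω''] {μ : Measure Ω} {ν : Measure Ω'}
    {ρ : Measure Ω''} [IsFiniteMeasure μ] [IsFiniteMeasure ν] {W : Ω × Ω' → ℝ} {Y : Ω'' → ℝ}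
    (hW : Measurable W) (hY : Measurable Y) (hlaw : (μ.prod ν).map W = ρ.map Y)
    {g : ℝ → ℝ} (hg : Measurable g) {M : ℝ} (hgM : ∀ w, ‖g w‖ ≤ M) :
    ∫ ω, ∫ ω', g (W (ω, ω')) ∂ν ∂μ = ∫ ω, g (Y ω) ∂ρ := by
  have hint : Integrable (fun p => g (W p)) (μ.prod ν) :=
    .of_bound (hg.comp hW).aestronglyMeasurable M (ae_of_all _ fun p => hgM _)
  rw [integral_integral hint, ← integral_map hW.aemeasurable hg.aestronglyMeasurable, hlaw,
    integral_map hY.aemeasurable hg.aestronglyMeasurable]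

section DistributionFunction

variable {Ω : Type*} [MeasurableSpace Ω] {μ : Measure Ω} [IsProbabilityMeasure μ]
  {lam : ℝ} {κ : ℝ → ℝ} {Z : ℝ → Ω → ℝ}

lemma measure_le_add_div_mul_measure_le (hlam : 0 < lam) (hκ : ContinuousOn κ (Ioi 0))
    (hdist : ∀ u ≥ 0, ∀ x > 0, (μ {ω | Z u ω ≤ x}).toReal =
      Real.exp (-(lam * ∫ y in x..(x + u / lam), κ y / y)))
    {s t : ℝ} (hs : 0 ≤ s) (ht : 0 ≤ t) {a : ℝ} (ha : 0 < a) :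
    μ {ω | Z s ω ≤ a + t / lam} * μ {ω | Z t ω ≤ a} = μ {ω | Z (s + t) ω ≤ a} := by
  have hat : 0 < a + t / lam := by positivity
  have hast : 0 < a + t / lam + s / lam := by positivity
  refine (ENNReal.toReal_eq_toReal_iff' (by finiteness) (by finiteness)).mp ?_
  rw [ENNReal.toReal_mul, hdist s hs _ hat, hdist t ht a ha, hdist (s + t) (add_nonneg hs ht) a ha,
    mul_comm, exp_neg_mul_integral_mul_exp_neg_mul_integral
      (intervalIntegrable_div_id_of_continuousOn hκ ha hat)
      (intervalIntegrable_div_id_of_continuousOn hκ hat hast), add_div, add_comm (s / lam),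
    add_assoc]

lemma map_prod_max_sub_eq_map (hlam : 0 < lam) (hκ : ContinuousOn κ (Ioi 0))
    (hZmeas : ∀ u, Measurable (Z u)) (hZnn : ∀ u, ∀ ω, 0 ≤ Z u ω)
    (hdist : ∀ u ≥ 0, ∀ x > 0, (μ {ω | Z u ω ≤ x}).toReal =
      Real.exp (-(lam * ∫ y in x..(x + u / lam), κ y / y)))
    {s t : ℝ} (hs : 0 ≤ s) (ht : 0 ≤ t) :
    (μ.prod μ).map (fun p => max (Z s p.1 - t / lam) (Z t p.2)) = μ.map (Z (s + t)) := by
  have hW : Measurable fun p : Ω × Ω => max (Z s p.1 - t / lam) (Z t p.2) := by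
    fun_prop
  have : IsProbabilityMeasure ((μ.prod μ).map fun p => max (Z s p.1 - t / lam) (Z t p.2)) :=
    Measure.isProbabilityMeasure_map hW.aemeasurable
  have : IsProbabilityMeasure (μ.map (Z (s + t))) :=
    Measure.isProbabilityMeasure_map (hZmeas _).aemeasurable
  refine Measure.eq_of_measure_Iic_eq_of_ne 0 fun a ha => ?_
  rw [Measure.map_apply hW measurableSet_Iic, Measure.map_apply (hZmeas _) measurableSet_Iic]
  change μ.prod μ {p | _ ≤ a} = μ {ω | Z (s + t) ω ≤ a}
  rw [measure_prod_setOf_max_sub_le]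
  rcases ha.lt_or_gt with ha | ha
  · have hnull : ∀ u, μ {ω | Z u ω ≤ a} = 0 := fun u => by
      have hempty : {ω | Z u ω ≤ a} = ∅ :=
        eq_empty_of_forall_notMem fun ω hω => (hω.trans_lt ha).not_ge (hZnn u ω)
      rw [hempty, measure_empty]
    rw [hnull, hnull, mul_zero]
  · exact measure_le_add_div_mul_measure_le hlam hκ hdist hs ht ha

end DistributionFunction

theorem semigroup_property_general {Ω : Type*} [MeasurableSpace Ω]
    (μ : Measure Ω) [IsProbabilityMeasure μ] (lam : ℝ) (hlam : 0 < lam)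
    (κ : ℝ → ℝ) (hκcont : ContinuousOn κ (Set.Ioi 0))
    (Z : ℝ → Ω → ℝ) (hZmeas : ∀ u, Measurable (Z u)) (hZnn : ∀ u, ∀ ω, 0 ≤ Z u ω)
    (hdist : ∀ u ≥ 0, ∀ x > 0, (μ {ω | Z u ω ≤ x}).toReal =
      Real.exp (-(lam * ∫ y in x..(x + u / lam), κ y / y)))
    (T : ℝ → (ℝ → ℝ) → ℝ → ℝ)
    (hT : ∀ u ≥ 0, ∀ f : ℝ → ℝ, ∀ x : ℝ,
      T u f x = ∫ ω, f (max (x - u / lam) (Z u ω)) ∂μ) :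
    ∀ f : ℝ → ℝ, Continuous f → Tendsto f atTop (nhds 0) →
      ∀ s ≥ 0, ∀ t ≥ 0, ∀ x ≥ 0, T s (T t f) x = T (s + t) f x := by
  intro f hfc hf0 s hs t ht x hx
  set c := x - (s + t) / lam
  obtain ⟨M, hM⟩ := isBounded_iff_forall_norm_le.mp (hfc.isBounded_image_Ici_of_tendsto hf0 c)
  have hmax : ∀ a b, max (max (x - s / lam) a - t / lam) b = max c (max (a - t / lam) b) :=
    fun a b => by rw [← max_sub_sub_right, max_assoc, sub_sub, ← add_div]
  calc T s (T t f) x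
      = ∫ ω, ∫ ω', f (max c (max (Z s ω - t / lam) (Z t ω'))) ∂μ ∂μ := by
        simp only [hT s hs, hT t ht, hmax]
    _ = ∫ ω, f (max c (Z (s + t) ω)) ∂μ :=
        integral_integral_comp_eq_of_map_prod_eq (by fun_prop) (hZmeas _)
          (map_prod_max_sub_eq_map hlam hκcont hZmeas hZnn hdist hs ht)
          (by fun_prop) fun w => hM _ (mem_image_of_mem f (le_max_left c w))
    _ = T (s + t) f x := (hT _ (add_nonneg hs ht) f x).symm

theorem semigroup_property {Ω : Type*} [MeasurableSpace Ω]
    (μ : Measure Ω) [IsProbabilityMeasure μ] (lam : ℝ) (hlam : 0 < lam)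
    (κ : ℝ → ℝ) (hκcont : ContinuousOn κ (Set.Ioi 0)) (hκpos : ∀ y > 0, 0 < κ y)
    (hκbdd : ∃ K : ℝ, ∀ y > 0, κ y ≤ K)
    (Z : ℝ → Ω → ℝ) (hZmeas : ∀ u, Measurable (Z u)) (hZnn : ∀ u, ∀ ω, 0 ≤ Z u ω)
    (hdist : ∀ u ≥ 0, ∀ x > 0, (μ {ω | Z u ω ≤ x}).toReal =
      Real.exp (-(lam * ∫ y in x..(x + u / lam), κ y / y)))
    (T : ℝ → (ℝ → ℝ) → ℝ → ℝ)
    (hT : ∀ u ≥ 0, ∀ f : ℝ → ℝ, ∀ x : ℝ,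
      T u f x = ∫ ω, f (max (x - u / lam) (Z u ω)) ∂μ) :
    ∀ f : ℝ → ℝ, Continuous f → Tendsto f atTop (nhds 0) →
      ∀ s ≥ 0, ∀ t ≥ 0, ∀ x ≥ 0, T s (T t f) x = T (s + t) f x :=
  semigroup_property_general μ lam hlam κ hκcont Z hZmeas hZnn hdist T hT
end

section
/- Let T_n f(x) = E[f(max(x - I/n, M/n))] where I and M are independent nonnegative random variables (I exponential with rate λ_n). Then the k-th iterate satisfies T_n^k f(x) = E[f(max(x - (1/n)Σ_{j=1}^k I_j, (1/n)·max_{1≤i≤k}(M_i - Σ_{j=i}^{k-1} I_j)))], where (I_j) and (M_i) are independent i.i.d. copies of I and M respectively. -/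
/-!
`T_n` is the transition operator of the recursion `y ↦ max (y - I/n) (M/n)`, so `T_n^k f (x)` is
the expectation of `f` at the end of `k` steps driven by independent copies of `(I, M)`, and the
claimed integrand is the closed form of those `k` steps. Write `T_n^(k+1) = T_n^k ∘ T_n` and apply
the induction hypothesis to the bounded measurable function `T_n f`: the inner integral is a fresh
step whose variables may be taken to be `(I_(k+1), M_(k+1))`, since these are independent of the
first `k` pairs and distributed as `(I_1, M_1)`. Appending this step to the closed form for `k`
steps gives the closed form for `k + 1` steps with `I_k` and `I_(k+1)` exchanged, and this
exchange does not change the joint law of the i.i.d. family.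
-/

open Filter Set Finset MeasureTheory ProbabilityTheory

/-- The result of `k` steps of `y ↦ max (y - c * a) (c * b)` started at `x`, in closed form, where
step `1` uses `(a k, b 1)` and step `m ≥ 2` uses `(a (m - 1), b m)`. -/
noncomputable def lindleyIterate (c x : ℝ) (a b : ℕ → ℝ) (k : ℕ)
    (hk : (Finset.Icc 1 k).Nonempty) : ℝ :=
  max (x - c * ∑ j ∈ Finset.Icc 1 k, a j)
    (c * (Finset.Icc 1 k).sup' hk fun i => b i - ∑ j ∈ Finset.Icc i (k - 1), a j)

section

variable {c x : ℝ} {a b : ℕ → ℝ} {k : ℕ}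

theorem lindleyIterate_congr {a' b' : ℕ → ℝ} (hk : (Finset.Icc 1 k).Nonempty)
    (ha : ∀ j ∈ Finset.Icc 1 k, a j = a' j) (hb : ∀ i ∈ Finset.Icc 1 k, b i = b' i) :
    lindleyIterate c x a b k hk = lindleyIterate c x a' b' k hk := by
  have hsub : ∀ i ∈ Finset.Icc 1 k, Finset.Icc i (k - 1) ⊆ Finset.Icc 1 k :=
    fun i hi j hj => by simp only [Finset.mem_Icc] at hi hj ⊢; omega
  unfold lindleyIterate
  rw [sum_congr rfl ha, sup'_congr hk rfl fun i hi => by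
    rw [hb i hi, sum_congr rfl fun j hj => ha j (hsub i hi hj)]]

theorem lindleyIterate_one (h : (Finset.Icc 1 1).Nonempty) :
    lindleyIterate c x a b 1 h = max (x - c * a 1) (c * b 1) := by
  simp [lindleyIterate]

theorem lindleyIterate_succ_comp_swap (hc : 0 ≤ c) (h : (Finset.Icc 1 k).Nonempty)
    (h' : (Finset.Icc 1 (k + 1)).Nonempty) :
    lindleyIterate c x (a ∘ Equiv.swap k (k + 1)) b (k + 1) h' =
      max (lindleyIterate c x a b k h - c * a (k + 1)) (c * b (k + 1)) := by
  have hk : 1 ≤ k := Finset.nonempty_Icc.1 h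
  set a' := a ∘ Equiv.swap k (k + 1)
  have ha' : ∀ j ∈ Finset.Icc 1 (k - 1), a' j = a j := fun j hj => by
    simp only [Finset.mem_Icc] at hj
    exact congrArg a (Equiv.swap_apply_of_ne_of_ne (by omega) (by omega))
  have hsum : ∑ j ∈ Finset.Icc 1 (k + 1), a' j = ∑ j ∈ Finset.Icc 1 k, a j + a (k + 1) := by
    change ∑ j ∈ Finset.Icc 1 (k + 1), a (Equiv.swap k (k + 1) j) = _
    rw [Equiv.Perm.sum_comp _ _ a fun j hj => ?_, sum_Icc_succ_top (by omega)]
    by_contra hj'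
    simp only [mem_coe, Finset.mem_Icc] at hj'
    exact hj (Equiv.swap_apply_of_ne_of_ne (by omega) (by omega))
  have htail : ∀ i ∈ Finset.Icc 1 k,
      ∑ j ∈ Finset.Icc i (k + 1 - 1), a' j =
        ∑ j ∈ Finset.Icc i (k - 1), a j + a (k + 1) := by
    intro i hi
    simp only [Finset.mem_Icc] at hi
    obtain ⟨m, rfl⟩ : ∃ m, k = m + 1 := ⟨k - 1, by omega⟩
    rw [Nat.add_sub_cancel, sum_Icc_succ_top (by omega)]
    simp only [a', Function.comp, Equiv.swap_apply_left, Nat.add_sub_cancel]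
    congr 1
    exact sum_congr rfl fun j hj => ha' j (by simp only [Finset.mem_Icc] at hj ⊢; omega)
  have hsup :
      (Finset.Icc 1 (k + 1)).sup' h' (fun i => b i - ∑ j ∈ Finset.Icc i (k + 1 - 1), a' j) =
        max (b (k + 1)) ((Finset.Icc 1 k).sup' h
          (fun i => b i - ∑ j ∈ Finset.Icc i (k - 1), a j) - a (k + 1)) := by
    rw [sup'_congr h' (Finset.insert_Icc_right_eq_Icc_add_one (by omega)).symm fun _ _ => rfl,
      sup'_insert h]
    congr 1
    · simp
    · rw [sub_eq_add_neg, sup'_add]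
      exact sup'_congr h rfl fun i hi => by rw [htail i hi]; ring
  rw [lindleyIterate, lindleyIterate, hsum, hsup, mul_max_of_nonneg _ _ hc, ← max_sub_sub_right,
    max_comm (c * b (k + 1)), ← max_assoc]
  ring_nf

theorem measurable_lindleyIterate {δ : Type*} [MeasurableSpace δ] {a b : ℕ → δ → ℝ}
    (ha : ∀ j, Measurable (a j)) (hb : ∀ i, Measurable (b i)) (hk : (Finset.Icc 1 k).Nonempty) :
    Measurable fun t => lindleyIterate c x (a · t) (b · t) k hk := by
  unfold lindleyIterate
  have hsup := Finset.measurable_sup' hk fun i _ =>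
    (hb i).sub (Finset.measurable_sum (Finset.Icc i (k - 1)) fun j _ => ha j)
  rw [show (Finset.Icc 1 k).sup' hk _ = _ from funext fun t => Finset.sup'_apply hk _ t] at hsup
  fun_prop

end

namespace ProbabilityTheory

variable {Ω : Type*} [MeasurableSpace Ω] {μ : Measure Ω}

theorem IndepFun.integral_comp_eq_integral_integral [IsProbabilityMeasure μ] {α β : Type*}
    [MeasurableSpace α] [MeasurableSpace β] {X : Ω → α} {Y : Ω → β} (hXY : IndepFun X Y μ)
    (hX : Measurable X) (hY : Measurable Y) {G : α × β → ℝ} (hG : Measurable G) {C : ℝ}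
    (hC : ∀ p, ‖G p‖ ≤ C) :
    ∫ ω, G (X ω, Y ω) ∂μ = ∫ ω, ∫ ω', G (X ω, Y ω') ∂μ ∂μ := by
  have hGint : Integrable G ((μ.map X).prod (μ.map Y)) :=
    .of_bound hG.aestronglyMeasurable C (.of_forall hC)
  calc ∫ ω, G (X ω, Y ω) ∂μ = ∫ p, G p ∂(μ.map fun ω => (X ω, Y ω)) :=
        (integral_map (hX.prodMk hY).aemeasurable hG.aestronglyMeasurable).symm
    _ = ∫ p, G p ∂((μ.map X).prod (μ.map Y)) := by
        rw [(indepFun_iff_map_prod_eq_prod_map_map hX.aemeasurable hY.aemeasurable).1 hXY]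
    _ = ∫ a, ∫ b, G (a, b) ∂(μ.map Y) ∂(μ.map X) := integral_prod G hGint
    _ = ∫ ω, ∫ ω', G (X ω, Y ω') ∂μ ∂μ := by
        rw [integral_map hX.aemeasurable
          (hG.stronglyMeasurable.integral_prod_right' (ν := μ.map Y)).aestronglyMeasurable]
        refine integral_congr_ae (.of_forall fun ω => ?_)
        exact integral_map hY.aemeasurable (hG.comp measurable_prodMk_left).aestronglyMeasurable

theorem iIndepFun.integral_comp_reindex {ι β : Type*} [MeasurableSpace β] {Z : ι → Ω → β}
    (hZ : iIndepFun Z μ) (hm : ∀ i, Measurable (Z i)) {σ : ι → ι} (hσ : σ.Injective)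
    (hlaw : ∀ i, μ.map (Z (σ i)) = μ.map (Z i)) {F : (ι → β) → ℝ} (hF : Measurable F) :
    ∫ ω, F (fun i => Z (σ i) ω) ∂μ = ∫ ω, F (fun i => Z i ω) ∂μ := by
  have hlaw_eq : μ.map (fun ω i => Z (σ i) ω) = μ.map (fun ω i => Z i ω) := by
    rw [(hZ.precomp hσ).map_fun_eq_infinitePi_map (fun i => hm (σ i)),
      hZ.map_fun_eq_infinitePi_map hm]
    exact congrArg Measure.infinitePi (funext hlaw)
  rw [← integral_map (measurable_pi_lambda _ fun i => hm (σ i)).aemeasurable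
      hF.aestronglyMeasurable, hlaw_eq,
    integral_map (measurable_pi_lambda _ hm).aemeasurable hF.aestronglyMeasurable]

theorem iIndepFun.indepFun_indicator {ι β : Type*} [MeasurableSpace β] [Zero β]
    {Z : ι → Ω → β} (hZ : iIndepFun Z μ) (hm : ∀ i, Measurable (Z i)) {S T : Finset ι}
    (hST : Disjoint S T) :
    IndepFun (fun ω => (S : Set ι).indicator (Z · ω))
      (fun ω => (T : Set ι).indicator (Z · ω)) μ := by
  classical
  have hext : ∀ U : Finset ι,
      Measurable fun (y : U → β) (i : ι) => if h : i ∈ U then y ⟨i, h⟩ else 0 :=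
    fun U => measurable_pi_lambda _ fun i => by
      by_cases h : i ∈ U <;> simp only [h, dite_true, dite_false]
      exacts [measurable_pi_apply _, measurable_const]
  convert (hZ.indepFun_finset S T hST hm).comp (hext S) (hext T) using 1
  · ext ω i; by_cases h : i ∈ S <;> simp [Set.indicator, h]
  · ext ω i; by_cases h : i ∈ T <;> simp [Set.indicator, h]

end ProbabilityTheory

section
variable {Ω : Type*} [MeasurableSpace Ω] {μ : Measure Ω} {I M : ℕ → Ω → ℝ}

theorem integral_comp_reindex_of_iid (hI : ∀ j, Measurable (I j)) (hM : ∀ i, Measurable (M i))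
    (hindep : iIndepFun (Sum.elim I M) μ) (hIid : ∀ j j', μ.map (I j) = μ.map (I j'))
    (hMid : ∀ i i', μ.map (M i) = μ.map (M i')) {σ τ : ℕ → ℕ} (hσ : σ.Injective)
    (hτ : τ.Injective) {F : (ℕ → ℝ) × (ℕ → ℝ) → ℝ} (hF : Measurable F) :
    ∫ ω, F (fun j => I (σ j) ω, fun i => M (τ i) ω) ∂μ =
      ∫ ω, F (fun j => I j ω, fun i => M i ω) ∂μ := by
  have hm : ∀ a, Measurable (Sum.elim I M a) := fun a => by cases a <;> simp [hI, hM]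
  refine hindep.integral_comp_reindex hm (σ := Sum.map σ τ) (hσ.sumMap hτ) (fun a => ?_)
    (hF.comp ((measurable_pi_lambda _ fun j => measurable_pi_apply (Sum.inl j)).prodMk
      (measurable_pi_lambda _ fun i => measurable_pi_apply (Sum.inr i))))
  cases a
  exacts [hIid _ _, hMid _ _]

theorem integral_comp_pair_eq (hI : ∀ j, Measurable (I j)) (hM : ∀ i, Measurable (M i))
    (hindep : iIndepFun (Sum.elim I M) μ) (hIid : ∀ j j', μ.map (I j) = μ.map (I j'))
    (hMid : ∀ i i', μ.map (M i) = μ.map (M i')) {h : ℝ × ℝ → ℝ} (hh : Measurable h)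
    (j j' : ℕ) :
    ∫ ω, h (I j ω, M j ω) ∂μ = ∫ ω, h (I j' ω, M j' ω) ∂μ := by
  have := integral_comp_reindex_of_iid hI hM hindep hIid hMid (Equiv.swap j j').injective
    (Equiv.swap j j').injective (F := fun p => h (p.1 j', p.2 j'))
    (hh.comp ((measurable_pi_apply j').comp measurable_fst |>.prodMk
      ((measurable_pi_apply j').comp measurable_snd)))
  simpa only [Equiv.swap_apply_right] using this

variable {c x : ℝ} {k : ℕ} {f : ℝ → ℝ}

theorem integral_lindleyIterate_succ_eq_append (hI : ∀ j, Measurable (I j))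
    (hM : ∀ i, Measurable (M i)) (hindep : iIndepFun (Sum.elim I M) μ)
    (hIid : ∀ j j', μ.map (I j) = μ.map (I j')) (hMid : ∀ i i', μ.map (M i) = μ.map (M i'))
    (hf : Measurable f) (hc : 0 ≤ c) (h : (Finset.Icc 1 k).Nonempty)
    (h' : (Finset.Icc 1 (k + 1)).Nonempty) :
    ∫ ω, f (lindleyIterate c x (I · ω) (M · ω) (k + 1) h') ∂μ =
      ∫ ω, f (max (lindleyIterate c x (I · ω) (M · ω) k h - c * I (k + 1) ω)
        (c * M (k + 1) ω)) ∂μ := by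
  rw [← integral_comp_reindex_of_iid hI hM hindep hIid hMid (Equiv.swap k (k + 1)).injective
    Function.injective_id (F := fun p => f (lindleyIterate c x p.1 p.2 (k + 1) h'))
    (hf.comp (measurable_lindleyIterate
      (fun j => (measurable_pi_apply j).comp measurable_fst)
      (fun i => (measurable_pi_apply i).comp measurable_snd) h'))]
  exact integral_congr_ae (.of_forall fun ω => congrArg f
    (lindleyIterate_succ_comp_swap (a := (I · ω)) (b := (M · ω)) hc h h'))

theorem integral_lindleyIterate_append_eq_integral_integral (hI : ∀ j, Measurable (I j))
    (hM : ∀ i, Measurable (M i)) (hindep : iIndepFun (Sum.elim I M) μ)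
    (hf : Measurable f) {C : ℝ} (hfC : ∀ y, |f y| ≤ C) (h : (Finset.Icc 1 k).Nonempty) :
    ∫ ω, f (max (lindleyIterate c x (I · ω) (M · ω) k h - c * I (k + 1) ω)
        (c * M (k + 1) ω)) ∂μ =
      ∫ ω, ∫ ω', f (max (lindleyIterate c x (I · ω) (M · ω) k h - c * I (k + 1) ω')
        (c * M (k + 1) ω')) ∂μ ∂μ := by
  have := hindep.isProbabilityMeasure
  have hm : ∀ a, Measurable (Sum.elim I M a) := fun a => by cases a <;> simp [hI, hM]
  set S := (Finset.Icc 1 k).disjSum (Finset.Icc 1 k)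
  set T := ({k + 1} : Finset ℕ).disjSum {k + 1}
  have hST : Disjoint S T := by
    rw [Finset.disjoint_left]
    rintro (j | j) <;> simp [S, T] <;> omega
  set G : (ℕ ⊕ ℕ → ℝ) × (ℕ ⊕ ℕ → ℝ) → ℝ := fun p =>
    f (max (lindleyIterate c x (fun j => p.1 (.inl j)) (fun i => p.1 (.inr i)) k h -
      c * p.2 (.inl (k + 1))) (c * p.2 (.inr (k + 1))))
  have hG : Measurable G := by
    have := measurable_lindleyIterate (c := c) (x := x)
      (a := fun j (p : (ℕ ⊕ ℕ → ℝ) × (ℕ ⊕ ℕ → ℝ)) => p.1 (.inl j))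
      (b := fun i (p : (ℕ ⊕ ℕ → ℝ) × (ℕ ⊕ ℕ → ℝ)) => p.1 (.inr i))
      (fun j => (measurable_pi_apply (Sum.inl j)).comp measurable_fst)
      (fun i => (measurable_pi_apply (Sum.inr i)).comp measurable_fst) h
    fun_prop
  have hind : ∀ U : Finset (ℕ ⊕ ℕ),
      Measurable fun ω => (U : Set _).indicator (Sum.elim I M · ω) :=
    fun U => measurable_pi_lambda _ fun a => by
      by_cases ha : a ∈ U <;> simp [Set.indicator, ha, hm a]
  have hGS : ∀ ω,
      lindleyIterate c x (fun j => (S : Set _).indicator (Sum.elim I M · ω) (.inl j))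
        (fun i => (S : Set _).indicator (Sum.elim I M · ω) (.inr i)) k h =
      lindleyIterate c x (I · ω) (M · ω) k h := fun ω =>
    lindleyIterate_congr h (fun j hj => Set.indicator_of_mem (by simpa [S] using hj) _)
      (fun i hi => Set.indicator_of_mem (by simpa [S] using hi) _)
  have := (hindep.indepFun_indicator hm hST).integral_comp_eq_integral_integral
    (hind S) (hind T) hG (C := C) (fun p => hfC _)
  simpa [G, hGS, T] using this

theorem integral_lindleyIterate_succ (hI : ∀ j, Measurable (I j)) (hM : ∀ i, Measurable (M i))
    (hindep : iIndepFun (Sum.elim I M) μ) (hIid : ∀ j j', μ.map (I j) = μ.map (I j'))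
    (hMid : ∀ i i', μ.map (M i) = μ.map (M i')) (hf : Measurable f) {C : ℝ}
    (hfC : ∀ y, |f y| ≤ C) (hc : 0 ≤ c) (h : (Finset.Icc 1 k).Nonempty)
    (h' : (Finset.Icc 1 (k + 1)).Nonempty) :
    ∫ ω, f (lindleyIterate c x (I · ω) (M · ω) (k + 1) h') ∂μ =
      ∫ ω, ∫ ω', f (max (lindleyIterate c x (I · ω) (M · ω) k h - c * I 1 ω')
        (c * M 1 ω')) ∂μ ∂μ := by
  rw [integral_lindleyIterate_succ_eq_append hI hM hindep hIid hMid hf hc h h',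
    integral_lindleyIterate_append_eq_integral_integral hI hM hindep hf hfC h]
  exact integral_congr_ae (.of_forall fun ω => integral_comp_pair_eq hI hM hindep hIid hMid
    (h := fun p => f (max (lindleyIterate c x (I · ω) (M · ω) k h - c * p.1) (c * p.2)))
    (by fun_prop) (k + 1) 1)

end

theorem iterate_transition_operator_general {Ω : Type*} [MeasurableSpace Ω]
    (μ : Measure Ω) [IsProbabilityMeasure μ] (n : ℕ)
    (lamn : ℝ)
    (I M : ℕ → Ω → ℝ)
    (hImeas : ∀ j, Measurable (I j)) (hMmeas : ∀ i, Measurable (M i))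
    (hindep : iIndepFun (Sum.elim I M) μ)
    (hIexp : ∀ j, μ.map (I j) = ProbabilityTheory.expMeasure lamn)
    (hMid : ∀ i i', μ.map (M i) = μ.map (M i'))
    (f : ℝ → ℝ) (hfmeas : Measurable f) (hfbdd : ∃ Cf : ℝ, ∀ x, |f x| ≤ Cf)
    (Tn : (ℝ → ℝ) → ℝ → ℝ)
    (hTn : ∀ g : ℝ → ℝ, ∀ x : ℝ,
      Tn g x = ∫ ω, g (max (x - I 1 ω / n) (M 1 ω / n)) ∂μ) :
    ∀ k : ℕ, 1 ≤ k → ∀ x : ℝ, ∀ hne : (Finset.Icc 1 k).Nonempty,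
      Tn^[k] f x = ∫ ω, f (max
        (x - (1 / (n : ℝ)) * ∑ j ∈ Finset.Icc 1 k, I j ω)
        ((1 / (n : ℝ)) * (Finset.Icc 1 k).sup' hne
          (fun i => M i ω - ∑ j ∈ Finset.Icc i (k - 1), I j ω))) ∂μ := by
  have hIid : ∀ j j', μ.map (I j) = μ.map (I j') :=
    fun j j' => (hIexp j).trans (hIexp j').symm
  suffices key : ∀ k, 1 ≤ k → ∀ g : ℝ → ℝ, Measurable g → (∃ C, ∀ y, |g y| ≤ C) → ∀ x hne,
      Tn^[k] g x = ∫ ω, g (lindleyIterate (1 / n) x (I · ω) (M · ω) k hne) ∂μ from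
    fun k hk x hne => key k hk f hfmeas hfbdd x hne
  intro k hk
  induction k, hk using Nat.le_induction with
  | base =>
    rintro g - - x hne
    simp_rw [Function.iterate_one, hTn, lindleyIterate_one, one_div_mul_eq_div]
  | succ k hk ih =>
    rintro g hg ⟨C, hC⟩ x hne
    have hTg_meas : Measurable (Tn g) := by
      rw [funext (hTn g)]
      exact (StronglyMeasurable.integral_prod_right (by fun_prop)).measurable
    have hTg_bdd : ∀ y, |Tn g y| ≤ C := fun y => by
      simpa [hTn] using norm_integral_le_of_norm_le_const (μ := μ)
        (.of_forall fun ω => (Real.norm_eq_abs _).trans_le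
          (hC (max (y - I 1 ω / n) (M 1 ω / n))))
    have hne' : (Finset.Icc 1 k).Nonempty := Finset.nonempty_Icc.2 hk
    rw [Function.iterate_succ_apply, ih (Tn g) hTg_meas ⟨C, hTg_bdd⟩ x hne',
      integral_lindleyIterate_succ hImeas hMmeas hindep hIid hMid hg hC (by positivity) hne']
    simp_rw [hTn, one_div_mul_eq_div]

theorem iterate_transition_operator {Ω : Type*} [MeasurableSpace Ω]
    (μ : Measure Ω) [IsProbabilityMeasure μ] (n : ℕ) (hn : 1 ≤ n)
    (lamn : ℝ) (hlamn : 0 < lamn)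
    (I M : ℕ → Ω → ℝ)
    (hImeas : ∀ j, Measurable (I j)) (hMmeas : ∀ i, Measurable (M i))
    (hMnn : ∀ i ω, 0 ≤ M i ω)
    (hindep : iIndepFun (Sum.elim I M) μ)
    (hIexp : ∀ j, μ.map (I j) = ProbabilityTheory.expMeasure lamn)
    (hMid : ∀ i i', μ.map (M i) = μ.map (M i'))
    (f : ℝ → ℝ) (hfmeas : Measurable f) (hfbdd : ∃ Cf : ℝ, ∀ x, |f x| ≤ Cf)
    (Tn : (ℝ → ℝ) → ℝ → ℝ)
    (hTn : ∀ g : ℝ → ℝ, ∀ x : ℝ,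
      Tn g x = ∫ ω, g (max (x - I 1 ω / n) (M 1 ω / n)) ∂μ) :
    ∀ k : ℕ, 1 ≤ k → ∀ x : ℝ, ∀ hne : (Finset.Icc 1 k).Nonempty,
      Tn^[k] f x = ∫ ω, f (max
        (x - (1 / (n : ℝ)) * ∑ j ∈ Finset.Icc 1 k, I j ω)
        ((1 / (n : ℝ)) * (Finset.Icc 1 k).sup' hne
          (fun i => M i ω - ∑ j ∈ Finset.Icc i (k - 1), I j ω))) ∂μ :=
  iterate_transition_operator_general μ n lamn I M hImeas hMmeas hindep hIexp hMid f hfmeas hfbdd Tn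
    hTn
end
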